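/- arXiv:1905.12776 — 3 statements merged into one kernel-verified Lean document; each statement's English description precedes it below -/
import Mathlib

section
/- For m > 0, define the sequence a_0 = 1 and a_{n+1} = (a_n + m)/(a_n + m + 1). Then the limit of a_n as n tends to infinity exists and equals (-m + sqrt(m^2 + 4m))/2. -/
open Filter Topology

/-
The limit `L` is the positive root of `L² + mL = m`, i.e. the fixed point of
`f x = (x + m) / (x + m + 1)` on `[0, ∞)`. For `x ≥ 0` one has
`f x - L = (x - L) / ((x + m + 1) (L + m + 1))`, so `f` contracts distances to `L` by the
factor `1 / (m + 1)² < 1`, and the iterates converge to `L` geometrically.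
-/

theorem tendsto_of_dist_succ_le_mul {α : Type*} [PseudoMetricSpace α] {u : ℕ → α} {x : α}
    {c : ℝ} (hc₀ : 0 ≤ c) (hc₁ : c < 1) (h : ∀ n, dist (u (n + 1)) x ≤ c * dist (u n) x) :
    Tendsto u atTop (𝓝 x) := by
  have hgeom (n : ℕ) : dist (u n) x ≤ c ^ n * dist (u 0) x :=
    le_geom (u := fun n ↦ dist (u n) x) hc₀ n fun k _ ↦ h k
  refine tendsto_iff_dist_tendsto_zero.2 <| squeeze_zero (fun _ ↦ dist_nonneg) hgeom ?_
  simpa using (tendsto_pow_atTop_nhds_zero_of_lt_one hc₀ hc₁).mul_const (dist (u 0) x)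

section Root

variable {m : ℝ}

theorem root_sq_add_mul_eq (hm : 0 ≤ m) :
    ((-m + √(m ^ 2 + 4 * m)) / 2) ^ 2 + m * ((-m + √(m ^ 2 + 4 * m)) / 2) = m := by
  have hs : √(m ^ 2 + 4 * m) ^ 2 = m ^ 2 + 4 * m := Real.sq_sqrt (by positivity)
  linear_combination hs / 4

theorem root_nonneg (hm : 0 ≤ m) : 0 ≤ (-m + √(m ^ 2 + 4 * m)) / 2 := by
  have : m ≤ √(m ^ 2 + 4 * m) := Real.le_sqrt_of_sq_le (by nlinarith)
  linarith

end Root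

section Contraction

variable {m L x : ℝ}

theorem add_div_add_one_sub_eq (hL : L ^ 2 + m * L = m) (hx : x + m + 1 ≠ 0)
    (hL₁ : L + m + 1 ≠ 0) :
    (x + m) / (x + m + 1) - L = (x - L) / ((x + m + 1) * (L + m + 1)) := by
  field_simp
  linear_combination (-(x + m + 1)) * hL

theorem abs_add_div_add_one_sub_le (hm : 0 ≤ m) (hL₀ : 0 ≤ L) (hL : L ^ 2 + m * L = m)
    (hx : 0 ≤ x) : |(x + m) / (x + m + 1) - L| ≤ ((m + 1) ^ 2)⁻¹ * |x - L| := by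
  have hden : (m + 1) ^ 2 ≤ (x + m + 1) * (L + m + 1) := by nlinarith
  rw [add_div_add_one_sub_eq hL (by positivity) (by positivity), abs_div,
    abs_of_pos (a := (x + m + 1) * (L + m + 1)) (by positivity), inv_mul_eq_div]
  gcongr

end Contraction

theorem stmt_0 (m : ℝ) (hm : 0 < m) (a : ℕ → ℝ)
    (ha0 : a 0 = 1)
    (harec : ∀ n, a (n + 1) = (a n + m) / (a n + m + 1)) :
    Filter.Tendsto a Filter.atTop
      (nhds ((-m + Real.sqrt (m ^ 2 + 4 * m)) / 2)) := by
  have ha : ∀ n, 0 ≤ a n := by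
    intro n
    induction n with
    | zero => rw [ha0]; exact zero_le_one
    | succ k ih => rw [harec k]; positivity
  refine tendsto_of_dist_succ_le_mul (c := ((m + 1) ^ 2)⁻¹) (by positivity)
    (inv_lt_one_of_one_lt₀ (by nlinarith)) fun n ↦ ?_
  rw [Real.dist_eq, Real.dist_eq, harec]
  exact abs_add_div_add_one_sub_le hm.le (root_nonneg hm.le) (root_sq_add_mul_eq hm.le) (ha n)
end

section
/- Let m > 0 and let a_0 = 1, a_{n+1} = (a_n + m)/(a_n + m + 1). With x_1 = (-m + sqrt(m^2+4m))/2 and x_2 = (-m - sqrt(m^2+4m))/2, for all n ≥ 0 we have (a_n - x_1)/(a_n - x_2) = ((1 - x_1)/(1 - x_2))^{n+1}. -/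
/-!
Both roots `r` of `x² + m x - m = 0` are fixed points of `f(a) = (a + m)/(a + m + 1)`, and
`f(a) - r = (a - r)(1 - r)/(a + m + 1)`. Dividing these identities for the two roots cancels the
common denominator, so `(a - x₁)/(a - x₂)` gets multiplied by `(1 - x₁)/(1 - x₂)` at every step;
at `a₀ = 1` it equals that factor, which gives the exponent `n + 1`.
-/

section Fractional

variable {K : Type*} [Field K] {m r : K}

theorem div_add_one_sub_eq_of_sq_add_mul_sub_eq_zero (hr : r ^ 2 + m * r - m = 0) {a : K}
    (ha : a + m + 1 ≠ 0) :
    (a + m) / (a + m + 1) - r = (a - r) * (1 - r) / (a + m + 1) := by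
  field_simp
  linear_combination -hr

theorem div_sub_div_sub_eq_mul_of_roots {r₁ r₂ : K} (hr₁ : r₁ ^ 2 + m * r₁ - m = 0)
    (hr₂ : r₂ ^ 2 + m * r₂ - m = 0) {a : K} (ha : a + m + 1 ≠ 0) :
    ((a + m) / (a + m + 1) - r₁) / ((a + m) / (a + m + 1) - r₂) =
      (a - r₁) / (a - r₂) * ((1 - r₁) / (1 - r₂)) := by
  rw [div_add_one_sub_eq_of_sq_add_mul_sub_eq_zero hr₁ ha,
    div_add_one_sub_eq_of_sq_add_mul_sub_eq_zero hr₂ ha, div_div_div_cancel_right₀ ha,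
    mul_div_mul_comm]

theorem sq_add_mul_sub_eq_zero_of_sq_eq [NeZero (2 : K)] {s : K} (hs : s ^ 2 = m ^ 2 + 4 * m) :
    ((-m + s) / 2) ^ 2 + m * ((-m + s) / 2) - m = 0 := by
  field_simp
  linear_combination hs

end Fractional

theorem stmt_2 (m : ℝ) (hm : 0 < m) (a : ℕ → ℝ)
    (ha0 : a 0 = 1)
    (harec : ∀ n, a (n + 1) = (a n + m) / (a n + m + 1))
    (x₁ x₂ : ℝ)
    (hx1 : x₁ = (-m + Real.sqrt (m ^ 2 + 4 * m)) / 2)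
    (hx2 : x₂ = (-m - Real.sqrt (m ^ 2 + 4 * m)) / 2)
    (hpos : ∀ n, 0 < a n - x₂) :
    ∀ n : ℕ, (a n - x₁) / (a n - x₂) = ((1 - x₁) / (1 - x₂)) ^ (n + 1) := by
  have hs : Real.sqrt (m ^ 2 + 4 * m) ^ 2 = m ^ 2 + 4 * m := Real.sq_sqrt (by positivity)
  have hx₁ : x₁ ^ 2 + m * x₁ - m = 0 := hx1 ▸ sq_add_mul_sub_eq_zero_of_sq_eq hs
  have hx₂ : x₂ ^ 2 + m * x₂ - m = 0 := by
    rw [hx2, sub_eq_add_neg]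
    exact sq_add_mul_sub_eq_zero_of_sq_eq (by rw [neg_sq, hs])
  have hsqrt : Real.sqrt (m ^ 2 + 4 * m) < m + 2 :=
    (Real.sqrt_lt' (by linarith)).2 (by nlinarith)
  have hden : ∀ n, a n + m + 1 ≠ 0 := fun n => by
    have := hpos n
    rw [hx2] at this
    linarith
  intro n
  induction n with
  | zero => rw [ha0, pow_one]
  | succ n ih => rw [harec, div_sub_div_sub_eq_mul_of_roots hx₁ hx₂ (hden n), ih, pow_succ _ (n + 1)]
end

section
/- Suppose f : ℝ^d → ℝ is α-strongly convex (α > 0) with respect to a norm ‖·‖, both f and its Fenchel conjugate f* are differentiable, and f satisfies f(y) ≤ f(x) + ⟨∇f(x), y - x⟩ + (β/2)‖x - y‖² for all x, y. Then for all x, y: f(y) ≥ f(x) + ⟨∇f(x), y - x⟩ + (1/(2β))‖∇f(x) - ∇f(y)‖_*², where ‖·‖_* is the dual norm. -/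
/-!
Strong convexity makes `f` convex, so `f` lies above its tangent plane at `x`. Testing this lower
bound against the `β`-smoothness upper bound around `y` at `w = y + (⟪u, ∇f x - ∇f y⟫ / β) • u`,
for `u` in the unit ball of `N`, gives `⟪u, ∇f x - ∇f y⟫ ^ 2 ≤ 2β (f y - f x - ⟪∇f x, y - x⟫)`;
the supremum over `u` is the dual norm. For `β ≤ 0` the correction term is nonpositive
(`1 / 0 = 0` in Lean) and the tangent bound alone suffices.
-/

open RealInnerProductSpace Set

section Convexity

variable {E : Type*} [NormedAddCommGroup E] [NormedSpace ℝ E]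

theorem convexOn_univ_of_forall_mem_Ioo {f : E → ℝ}
    (h : ∀ x y, ∀ lam ∈ Ioo (0 : ℝ) 1,
      f (lam • x + (1 - lam) • y) ≤ lam * f x + (1 - lam) * f y) :
    ConvexOn ℝ univ f := by
  refine convexOn_iff_forall_pos.mpr ⟨convex_univ, fun x _ y _ a b ha hb hab => ?_⟩
  obtain rfl : b = 1 - a := by linarith
  exact h x y a ⟨ha, by linarith⟩

theorem ConvexOn.add_apply_sub_le_of_hasFDerivAt {s : Set E} {f : E → ℝ} {f' : E →L[ℝ] ℝ} {x y : E}
    (hf : ConvexOn ℝ s f) (hx : x ∈ s) (hy : y ∈ s) (hfx : HasFDerivAt f f' x) :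
    f x + f' (y - x) ≤ f y := by
  let ℓ : ℝ →ᵃ[ℝ] E := AffineMap.lineMap x y
  have hderiv : HasDerivAt (f ∘ ℓ) (f' (y - x)) 0 :=
    (show ℓ 0 = x by simp [ℓ]) ▸ hfx |>.comp_hasDerivAt 0 AffineMap.hasDerivAt_lineMap
  have hslope := (hf.comp_affineMap ℓ).le_slope_of_hasDerivAt (by simpa [ℓ] using hx)
    (by simpa [ℓ] using hy) one_pos hderiv
  simp only [slope_def_field, Function.comp_apply, ℓ, AffineMap.lineMap_apply_one,
    AffineMap.lineMap_apply_zero, sub_zero, div_one] at hslope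
  linarith

end Convexity

section DualSeminorm

variable {E : Type*} [NormedAddCommGroup E] [InnerProductSpace ℝ E]

theorem inner_sub_sq_le_of_tangent_le_of_le_parabola (p : Seminorm ℝ E) {f : E → ℝ} {β : ℝ}
    (hβ : 0 < β) {x y gx gy u : E} (hx : ∀ w, f x + ⟪gx, w - x⟫ ≤ f w)
    (hy : ∀ w, f w ≤ f y + ⟪gy, w - y⟫ + β / 2 * p (y - w) ^ 2) (hu : p u ≤ 1) :
    ⟪u, gx - gy⟫ ^ 2 ≤ 2 * β * (f y - f x - ⟪gx, y - x⟫) := by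
  set s := ⟪u, gx - gy⟫
  set w := y + (s / β) • u
  have hlow := hx w
  have hup := hy w
  have hpw : p (y - w) ^ 2 ≤ (s / β) ^ 2 := by
    rw [← sq_abs (s / β)]
    gcongr
    rw [show y - w = -(s / β) • u by simp [w], map_smul_eq_mul, Real.norm_eq_abs, abs_neg]
    exact mul_le_of_le_one_right (abs_nonneg _) hu
  have hinner : ⟪gx, w - x⟫ - ⟪gy, w - y⟫ = ⟪gx, y - x⟫ + s ^ 2 / β := by
    simp only [w, add_sub_right_comm y, inner_add_right,
      real_inner_smul_right, s, inner_sub_right, real_inner_comm u]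
    field_simp
    ring
  have hpenalty := mul_le_mul_of_nonneg_left hpw (by positivity : 0 ≤ β / 2)
  have hD : s ^ 2 / (2 * β) ≤ f y - f x - ⟪gx, y - x⟫ := by
    have : β / 2 * (s / β) ^ 2 = s ^ 2 / β - s ^ 2 / (2 * β) := by field_simp; ring
    linarith
  rwa [div_le_iff₀' (by positivity)] at hD

theorem sSup_inner_sq_le (p : Seminorm ℝ E) (g : E) {K : ℝ}
    (h : ∀ u, p u ≤ 1 → ⟪u, g⟫ ^ 2 ≤ K) :
    sSup {r : ℝ | ∃ u, p u ≤ 1 ∧ r = ⟪u, g⟫} ^ 2 ≤ K := by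
  have hzero : (0 : ℝ) ∈ {r : ℝ | ∃ u, p u ≤ 1 ∧ r = ⟪u, g⟫} := ⟨0, by simp, by simp⟩
  have hbound : ∀ r ∈ {r : ℝ | ∃ u, p u ≤ 1 ∧ r = ⟪u, g⟫}, r ≤ √K := by
    rintro _ ⟨u, hu, rfl⟩
    exact (le_abs_self _).trans (Real.abs_le_sqrt (h u hu))
  have hK : 0 ≤ K := by simpa using h 0 (by simp)
  have hsup_le := csSup_le ⟨0, hzero⟩ hbound
  have hsup_nonneg := le_csSup ⟨_, hbound⟩ hzero
  calc _ ≤ √K ^ 2 := by gcongr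
    _ = K := Real.sq_sqrt hK

end DualSeminorm

theorem stmt_11_general (d : ℕ) (α β : ℝ) (hα : 0 < α)
    (N : EuclideanSpace ℝ (Fin d) → ℝ)
    (hN_tri : ∀ x y, N (x + y) ≤ N x + N y)
    (hN_smul : ∀ (r : ℝ) x, N (r • x) = |r| * N x)
    (Nd : EuclideanSpace ℝ (Fin d) → ℝ)
    (hNd : ∀ y, Nd y = sSup {r : ℝ | ∃ x, N x ≤ 1 ∧ r = ⟪x, y⟫})
    (f : EuclideanSpace ℝ (Fin d) → ℝ)
    (hdiff : Differentiable ℝ f)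
    (hsc : ∀ x y, ∀ lam : ℝ, lam ∈ Set.Ioo (0 : ℝ) 1 →
      f (lam • x + (1 - lam) • y) ≤
        lam * f x + (1 - lam) * f y - (α / 2) * lam * (1 - lam) * (N (x - y)) ^ 2)
    (hsm : ∀ x y, f y ≤ f x + ⟪gradient f x, y - x⟫ + (β / 2) * (N (x - y)) ^ 2) :
    ∀ x y, f y ≥ f x + ⟪gradient f x, y - x⟫ +
      (1 / (2 * β)) * (Nd (gradient f x - gradient f y)) ^ 2 := by
  let p : Seminorm ℝ (EuclideanSpace ℝ (Fin d)) := .of N hN_tri (by simpa using hN_smul)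
  have hconv : ConvexOn ℝ univ f := convexOn_univ_of_forall_mem_Ioo fun x y lam hlam => by
    have hpenalty : 0 ≤ α / 2 * lam * (1 - lam) * N (x - y) ^ 2 := by
      obtain ⟨hlam0, hlam1⟩ := hlam
      have : 0 < 1 - lam := by linarith
      positivity
    linarith [hsc x y lam hlam]
  intro x y
  have htangent : ∀ w, f x + ⟪gradient f x, w - x⟫ ≤ f w := fun w => by
    simpa using hconv.add_apply_sub_le_of_hasFDerivAt (mem_univ x) (mem_univ w)
      (hasGradientAt_iff_hasFDerivAt.mp (hdiff x).hasGradientAt)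
  rcases le_or_gt β 0 with hβ | hβ
  · have : 1 / (2 * β) * Nd (gradient f x - gradient f y) ^ 2 ≤ 0 :=
      mul_nonpos_of_nonpos_of_nonneg (by rw [one_div, inv_nonpos]; linarith) (sq_nonneg _)
    linarith [htangent y]
  · have hsq := sSup_inner_sq_le p (gradient f x - gradient f y) fun u hu =>
      inner_sub_sq_le_of_tangent_le_of_le_parabola p hβ htangent (hsm y) hu
    change sSup {r | ∃ u, N u ≤ 1 ∧ r = _} ^ 2 ≤ _ at hsq
    rw [← hNd] at hsq
    rw [ge_iff_le, ← le_sub_iff_add_le', div_mul_eq_mul_div, one_mul, div_le_iff₀ (by positivity)]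
    linarith

theorem stmt_11 (d : ℕ) (α β : ℝ) (hα : 0 < α)
    (N : EuclideanSpace ℝ (Fin d) → ℝ)
    (hN_tri : ∀ x y, N (x + y) ≤ N x + N y)
    (hN_smul : ∀ (r : ℝ) x, N (r • x) = |r| * N x)
    (hN_def : ∀ x, N x = 0 → x = 0)
    (Nd : EuclideanSpace ℝ (Fin d) → ℝ)
    (hNd : ∀ y, Nd y = sSup {r : ℝ | ∃ x, N x ≤ 1 ∧ r = ⟪x, y⟫})
    (f : EuclideanSpace ℝ (Fin d) → ℝ)
    (hdiff : Differentiable ℝ f)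
    (hsc : ∀ x y, ∀ lam : ℝ, lam ∈ Set.Ioo (0 : ℝ) 1 →
      f (lam • x + (1 - lam) • y) ≤
        lam * f x + (1 - lam) * f y - (α / 2) * lam * (1 - lam) * (N (x - y)) ^ 2)
    (hsm : ∀ x y, f y ≤ f x + ⟪gradient f x, y - x⟫ + (β / 2) * (N (x - y)) ^ 2)
    (fconj : EuclideanSpace ℝ (Fin d) → ℝ)
    (hfconj : ∀ y, fconj y = sSup {r : ℝ | ∃ x, r = ⟪x, y⟫ - f x})
    (hconjdiff : Differentiable ℝ fconj) :
    ∀ x y, f y ≥ f x + ⟪gradient f x, y - x⟫ +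
      (1 / (2 * β)) * (Nd (gradient f x - gradient f y)) ^ 2 :=
  stmt_11_general d α β hα N hN_tri hN_smul Nd hNd f hdiff hsc hsm
end
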